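/- arXiv:2511.23328 — 2 statements merged into one kernel-verified Lean document; each statement's English description precedes it below -/
import Mathlib

section
/- (Suppression effect, Proposition 2.) Define S(τ̂) = μ((0, τ̂·θ_H·z]) and R(τ̂) = r·μ((0, (θ_H·v − c)/S(τ̂))). If 0 ≤ τ̂₁ ≤ τ̂₂ and S(τ̂₁) > 0, then S(τ̂₁) ≤ S(τ̂₂) and R(τ̂₂) ≤ R(τ̂₁): an increase in perceived HIV transmission risk weakly raises the stigma level and weakly lowers the HIV testing rate. The same monotonicity holds for the testing rate among high-risk individuals R_H(τ̂) = μ((0, (θ_H·v − c)/S(τ̂))). -/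
open MeasureTheory

/-- The stigma level `S(τ̂) = μ((0, τ̂·θ_H·z])`. -/
noncomputable def stigma (μ : Measure ℝ) (θH z τ : ℝ) : ℝ :=
  (μ (Set.Ioc 0 (τ * θH * z))).toReal

/-- The testing rate among high-risk individuals
`R_H(τ̂) = μ((0, (θ_H·v − c)/S(τ̂)))`. -/
noncomputable def testingRateH (μ : Measure ℝ) (θH v c z τ : ℝ) : ℝ :=
  (μ (Set.Ioo 0 ((θH * v - c) / stigma μ θH z τ))).toReal


section

variable {μ : Measure ℝ} [IsFiniteMeasure μ]

theorem stigma_mono {θH z : ℝ} (h : 0 ≤ θH * z) : Monotone (stigma μ θH z) := by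
  intro τ₁ τ₂ hτ
  have hbound : τ₁ * θH * z ≤ τ₂ * θH * z := by
    simpa only [mul_assoc] using mul_le_mul_of_nonneg_right hτ h
  exact measureReal_mono (Set.Ioc_subset_Ioc_right hbound)

theorem testingRateH_le_of_stigma_le {θH v c z τ₁ τ₂ : ℝ} (hgain : c ≤ θH * v)
    (hS₁ : 0 < stigma μ θH z τ₁) (hS : stigma μ θH z τ₁ ≤ stigma μ θH z τ₂) :
    testingRateH μ θH v c z τ₂ ≤ testingRateH μ θH v c z τ₁ := by
  have hthreshold : (θH * v - c) / stigma μ θH z τ₂ ≤ (θH * v - c) / stigma μ θH z τ₁ :=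
    div_le_div_of_nonneg_left (sub_nonneg.mpr hgain) hS₁ hS
  exact measureReal_mono (Set.Ioo_subset_Ioo_right hthreshold)

end

theorem suppression_effect_general
    (μ : Measure ℝ) [IsProbabilityMeasure μ]
    (θL θH v c z r : ℝ)
    (hθL : 0 < θL) (hθLH : θL < θH)
    (hA1H : c < θH * v)
    (hz : 0 < z) (hr : 0 ≤ r)
    (τ₁ τ₂ : ℝ) (hτ₁₂ : τ₁ ≤ τ₂)
    (hS₁ : 0 < stigma μ θH z τ₁) :
    stigma μ θH z τ₁ ≤ stigma μ θH z τ₂ ∧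
    r * testingRateH μ θH v c z τ₂ ≤ r * testingRateH μ θH v c z τ₁ ∧
    testingRateH μ θH v c z τ₂ ≤ testingRateH μ θH v c z τ₁ := by
  have hθH : 0 < θH := hθL.trans hθLH
  have hS : stigma μ θH z τ₁ ≤ stigma μ θH z τ₂ := stigma_mono (mul_pos hθH hz).le hτ₁₂
  have hR := testingRateH_le_of_stigma_le hA1H.le hS₁ hS
  exact ⟨hS, mul_le_mul_of_nonneg_left hR hr, hR⟩

/-- Suppression effect, Proposition 2: if `0 ≤ τ̂₁ ≤ τ̂₂` and
`S(τ̂₁) > 0`, then `S(τ̂₁) ≤ S(τ̂₂)`, `R(τ̂₂) ≤ R(τ̂₁)` and `R_H(τ̂₂) ≤ R_H(τ̂₁)`. -/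
theorem suppression_effect
    (μ : Measure ℝ) [IsProbabilityMeasure μ] (hμ : μ (Set.Ioi (0 : ℝ)) = 1)
    (θL θH v c z r : ℝ)
    (hθL : 0 < θL) (hθLH : θL < θH) (hθH : θH < 1)
    (hv : 0 < v) (hc : 0 < c)
    (hA1L : θL * v < c) (hA1H : c < θH * v)
    (hz : 0 < z) (hr : 0 ≤ r)
    (τ₁ τ₂ : ℝ) (hτ₁ : 0 ≤ τ₁) (hτ₁₂ : τ₁ ≤ τ₂)
    (hS₁ : 0 < stigma μ θH z τ₁) :
    stigma μ θH z τ₁ ≤ stigma μ θH z τ₂ ∧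
    r * testingRateH μ θH v c z τ₂ ≤ r * testingRateH μ θH v c z τ₁ ∧
    testingRateH μ θH v c z τ₂ ≤ testingRateH μ θH v c z τ₁ :=
  suppression_effect_general μ θL θH v c z r hθL hθLH hA1H hz hr τ₁ τ₂ hτ₁₂ hS₁
end

section
/- (Strict monotonicity of the gap in stigma.) If 0 ≤ S₁ < S₂ and μ assigns positive measure to the interval (0, (θ_H·v − c)/S₂), then ∫ max(θ_H·v − c − y·S₂, 0) dμ(y) < ∫ max(θ_H·v − c − y·S₁, 0) dμ(y), and hence D(S₁) < D(S₂): higher stigma strictly widens the expected continuation-value gap between low- and high-risk types. -/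
open MeasureTheory

/-- The expected continuation-value gap
`D(S) = (θ_H − θ_L)·c_h − ∫ max(θ_H·v − c − y·S, 0) dμ(y)`. -/
noncomputable def gapD (μ : Measure ℝ) (θL θH v c ch S : ℝ) : ℝ :=
  (θH - θL) * ch - ∫ y, max (θH * v - c - y * S) 0 ∂μ

/-!
For `y ≥ 0` the payoff `max (A - y * S) 0` is antitone in `S`, and strictly so at every `y > 0`
with `y * S₂ < A`, i.e. on `(0, A / S₂)`. Integrating, the inequality between the integrals is
strict as soon as that interval has positive mass.
-/

section PositivePart

variable {A S₁ S₂ y : ℝ}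

lemma max_sub_mul_zero_le_max_sub_mul_zero (hy : 0 ≤ y) (hS : S₁ ≤ S₂) :
    max (A - y * S₂) 0 ≤ max (A - y * S₁) 0 :=
  max_le_max (sub_le_sub_left (mul_le_mul_of_nonneg_left hS hy) A) le_rfl

lemma max_sub_mul_zero_lt_max_sub_mul_zero (hy : 0 < y) (hS : S₁ < S₂) (hyA : y * S₂ < A) :
    max (A - y * S₂) 0 < max (A - y * S₁) 0 := by
  rw [max_eq_left (sub_nonneg.2 hyA.le)]
  exact (sub_lt_sub_left (mul_lt_mul_of_pos_left hS hy) A).trans_le (le_max_left _ _)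

end PositivePart

lemma integral_lt_integral_of_ae_le_of_forall_lt_on {α : Type*} [MeasurableSpace α]
    {μ : Measure α} {f g : α → ℝ} (hf : Integrable f μ) (hg : Integrable g μ)
    (hle : f ≤ᵐ[μ] g) {s : Set α} (hs : 0 < μ s) (hlt : ∀ x ∈ s, f x < g x) :
    ∫ x, f x ∂μ < ∫ x, g x ∂μ := by
  rw [← sub_pos, ← integral_sub hg hf,
    integral_pos_iff_support_of_nonneg_ae (hle.mono fun x hx ↦ sub_nonneg.2 hx) (hg.sub hf)]
  exact hs.trans_le (measure_mono fun x hx ↦ (sub_pos.2 (hlt x hx)).ne')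

section Integral

variable {μ : Measure ℝ} [IsFiniteMeasure μ] {A S₁ S₂ : ℝ}

lemma integrable_max_sub_mul_zero (hμ : ∀ᵐ y ∂μ, 0 ≤ y) {S : ℝ} (hS : 0 ≤ S) :
    Integrable (fun y ↦ max (A - y * S) 0) μ := by
  refine (integrable_const (max A 0)).mono' (by fun_prop) ?_
  filter_upwards [hμ] with y hy
  rw [Real.norm_of_nonneg (le_max_right _ _)]
  simpa using max_sub_mul_zero_le_max_sub_mul_zero (A := A) hy hS

theorem integral_max_sub_mul_zero_lt (hμ : ∀ᵐ y ∂μ, 0 ≤ y) (hS₁ : 0 ≤ S₁) (hS : S₁ < S₂)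
    (hpos : 0 < μ (Set.Ioo 0 (A / S₂))) :
    ∫ y, max (A - y * S₂) 0 ∂μ < ∫ y, max (A - y * S₁) 0 ∂μ := by
  have hS₂ : 0 < S₂ := hS₁.trans_lt hS
  refine integral_lt_integral_of_ae_le_of_forall_lt_on (integrable_max_sub_mul_zero hμ hS₂.le)
    (integrable_max_sub_mul_zero hμ hS₁)
    (hμ.mono fun y hy ↦ max_sub_mul_zero_le_max_sub_mul_zero hy hS.le) hpos ?_
  rintro y ⟨hy, hyA⟩
  exact max_sub_mul_zero_lt_max_sub_mul_zero hy hS ((lt_div_iff₀ hS₂).1 hyA)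

end Integral

theorem gap_strict_mono_general
    (μ : Measure ℝ) [IsProbabilityMeasure μ] (hμ : μ (Set.Ioi (0 : ℝ)) = 1)
    (θL θH v c ch : ℝ)
    (S₁ S₂ : ℝ) (hS₁ : 0 ≤ S₁) (hS₁₂ : S₁ < S₂)
    (hpos : 0 < μ (Set.Ioo 0 ((θH * v - c) / S₂))) :
    (∫ y, max (θH * v - c - y * S₂) 0 ∂μ)
      < (∫ y, max (θH * v - c - y * S₁) 0 ∂μ) ∧
    gapD μ θL θH v c ch S₁ < gapD μ θL θH v c ch S₂ := by
  have hμ_nonneg : ∀ᵐ y ∂μ, 0 ≤ y :=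
    ((ae_mem_iff_measure_eq measurableSet_Ioi.nullMeasurableSet).2 (by rw [hμ, measure_univ])).mono
      fun _ hy ↦ le_of_lt hy
  have hlt := integral_max_sub_mul_zero_lt hμ_nonneg hS₁ hS₁₂ hpos
  exact ⟨hlt, sub_lt_sub_left hlt _⟩

/-- Strict monotonicity of the gap in stigma: if `0 ≤ S₁ < S₂` and
`μ((0, (θ_H·v − c)/S₂)) > 0`, then
`∫ max(θ_H·v − c − y·S₂, 0) dμ < ∫ max(θ_H·v − c − y·S₁, 0) dμ` and
`D(S₁) < D(S₂)`. -/
theorem gap_strict_mono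
    (μ : Measure ℝ) [IsProbabilityMeasure μ] (hμ : μ (Set.Ioi (0 : ℝ)) = 1)
    (θL θH v c ch : ℝ)
    (hθL : 0 < θL) (hθLH : θL < θH) (hθH : θH < 1)
    (hv : 0 < v) (hc : 0 < c)
    (hA1L : θL * v < c) (hA1H : c < θH * v)
    (hch : 0 < ch)
    (S₁ S₂ : ℝ) (hS₁ : 0 ≤ S₁) (hS₁₂ : S₁ < S₂)
    (hpos : 0 < μ (Set.Ioo 0 ((θH * v - c) / S₂))) :
    (∫ y, max (θH * v - c - y * S₂) 0 ∂μ)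
      < (∫ y, max (θH * v - c - y * S₁) 0 ∂μ) ∧
    gapD μ θL θH v c ch S₁ < gapD μ θL θH v c ch S₂ :=
  gap_strict_mono_general μ hμ θL θH v c ch S₁ S₂ hS₁ hS₁₂ hpos
end
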